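/- arXiv:0803.1260 — 2 statements merged into one kernel-verified Lean document; each statement's English description precedes it below -/
import Mathlib

section
/- The set E₁ = ⋃_{l ∈ ℤ} [c_l, d_l], where d_{l-1} < c_l < d_l < c_{l+1} for all l ∈ ℤ, d_l - c_l ≥ C₃ > 0 and c_{l+1} - d_l ≤ C₄, satisfies: (i) every complementary interval (d_l, c_{l+1}) has length at most C₄, and (ii) there is a constant C₂ = C₂(C₃, C₄) such that for every j, ∑_{k ≠ j}(|J_k|/dist(J_k, J_j))² ≤ C₂, where J_l = (d_l, c_{l+1}). -/
set_option maxHeartbeats 1000000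


/-- Distance between two subsets of `ℝ`. -/
noncomputable def setDist (A B : Set ℝ) : ℝ :=
  sInf (Set.image2 (fun x y => |x - y|) A B)

/-- Example 1: the set `E₁ = ⋃_{l∈ℤ} [c_l, d_l]`, with
`d_{l-1} < c_l < d_l < c_{l+1}`, `d_l - c_l ≥ C₃ > 0` and `c_{l+1} - d_l ≤ C₄`, satisfies
(i) each complementary interval `J_l = (d_l, c_{l+1})` has length at most `C₄`, and
(ii) there is `C₂ = C₂(C₃, C₄) > 0` with `∑_{k ≠ j}(|J_k|/dist(J_k,J_j))² ≤ C₂` for all `j`. -/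
theorem example_one_satisfies_conditions
    (c d : ℤ → ℝ) (C₃ C₄ : ℝ) (hC₃ : 0 < C₃) (hC₄ : 0 < C₄)
    (horder : ∀ l : ℤ, d (l - 1) < c l ∧ c l < d l ∧ d l < c (l + 1))
    (hlen : ∀ l : ℤ, C₃ ≤ d l - c l)
    (hgap : ∀ l : ℤ, c (l + 1) - d l ≤ C₄) :
    (∀ l : ℤ, c (l + 1) - d l ≤ C₄) ∧
    ∃ C₂ : ℝ, 0 < C₂ ∧ ∀ j : ℤ, ∑' k : {k : ℤ // k ≠ j},
      ((c (k.1 + 1) - d k.1) /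
        setDist (Set.Ioo (d k.1) (c (k.1 + 1))) (Set.Ioo (d j) (c (j + 1)))) ^ 2 ≤ C₂ := by
  refine ⟨hgap, ?_⟩
  -- the comparison function
  set g : ℤ → ℝ := fun n => (C₄ / C₃) ^ 2 * (1 / (n : ℝ) ^ 2) with hg
  have hg_nonneg : ∀ n : ℤ, 0 ≤ g n := fun n => by positivity
  have hg_summable : Summable g :=
    (Real.summable_one_div_int_pow.mpr (by norm_num)).mul_left _
  -- key growth estimate
  have step : ∀ (j : ℤ) (n : ℕ), c (j + 1) + ((n : ℝ) + 1) * C₃ ≤ d (j + (n + 1)) := by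
    intro j n
    induction n with
    | zero =>
      have := hlen (j + 1)
      push_cast
      linarith
    | succ n ih =>
      have h1 := hlen (j + (n + 1) + 1)
      have h2 := (horder (j + (n + 1))).2.2
      have : (j : ℤ) + (n + 1) + 1 = j + ((n : ℤ) + 1 + 1) := by ring
      rw [this] at h1 h2
      push_cast at ih ⊢
      push_cast [this] at h1 h2
      linarith
  -- distance lower bound, for j < k
  have key : ∀ j k : ℤ, j < k → ∀ x ∈ Set.Ioo (d k) (c (k + 1)),
      ∀ y ∈ Set.Ioo (d j) (c (j + 1)), ((k - j : ℤ) : ℝ) * C₃ ≤ |x - y| := by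
    intro j k hjk x hx y hy
    obtain ⟨n, hn⟩ : ∃ n : ℕ, k = j + (n + 1) := by
      refine ⟨(k - j - 1).toNat, ?_⟩
      have : (0:ℤ) ≤ k - j - 1 := by omega
      omega
    subst hn
    have hd : c (j + 1) + ((n : ℝ) + 1) * C₃ ≤ d (j + (n + 1)) := step j n
    have hx1 : d (j + (n + 1)) < x := hx.1
    have hy1 : y < c (j + 1) := hy.2
    have hpos : ((n : ℝ) + 1) * C₃ ≤ x - y := by linarith
    have : ((j + (n + 1) - j : ℤ) : ℝ) = (n : ℝ) + 1 := by push_cast; ring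
    rw [this]
    calc ((n : ℝ) + 1) * C₃ ≤ x - y := hpos
      _ ≤ |x - y| := le_abs_self _
  -- distance lower bound in general
  have hdist : ∀ j k : ℤ, k ≠ j →
      |((k - j : ℤ) : ℝ)| * C₃ ≤
        setDist (Set.Ioo (d k) (c (k + 1))) (Set.Ioo (d j) (c (j + 1))) := by
    intro j k hkj
    apply le_csInf
    · exact Set.Nonempty.image2 (Set.nonempty_Ioo.mpr (horder k).2.2)
        (Set.nonempty_Ioo.mpr (horder j).2.2)
    · rintro b ⟨x, hx, y, hy, rfl⟩
      simp only
      rcases lt_or_gt_of_ne hkj with h | h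
      · -- k < j
        have := key k j h y hy x hx
        have habs : |((k - j : ℤ) : ℝ)| = ((j - k : ℤ) : ℝ) := by
          rw [abs_of_neg (by exact_mod_cast sub_neg.mpr h)]
          push_cast; ring
        rw [habs, abs_sub_comm]
        exact this
      · -- j < k
        have := key j k h x hx y hy
        have habs : |((k - j : ℤ) : ℝ)| = ((k - j : ℤ) : ℝ) :=
          abs_of_pos (by exact_mod_cast sub_pos.mpr h)
        rw [habs]
        exact this
  refine ⟨1 + ∑' n, g n, by have : (0:ℝ) ≤ ∑' n, g n := tsum_nonneg hg_nonneg; linarith, fun j => ?_⟩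
  -- termwise bound
  have hterm : ∀ k : {k : ℤ // k ≠ j},
      ((c (k.1 + 1) - d k.1) /
        setDist (Set.Ioo (d k.1) (c (k.1 + 1))) (Set.Ioo (d j) (c (j + 1)))) ^ 2
        ≤ g (k.1 - j) := by
    rintro ⟨k, hk⟩
    have hnz : ((k - j : ℤ) : ℝ) ≠ 0 := by
      exact_mod_cast sub_ne_zero.mpr hk
    have habs : (0:ℝ) < |((k - j : ℤ) : ℝ)| := abs_pos.mpr hnz
    have hD := hdist j k hk
    have hDpos : 0 < |((k - j : ℤ) : ℝ)| * C₃ := by positivity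
    have hnum0 : 0 ≤ c (k + 1) - d k := le_of_lt (by linarith [(horder k).2.2])
    have h1 : (c (k + 1) - d k) /
        setDist (Set.Ioo (d k) (c (k + 1))) (Set.Ioo (d j) (c (j + 1)))
        ≤ C₄ / (|((k - j : ℤ) : ℝ)| * C₃) :=
      div_le_div₀ hC₄.le (hgap k) hDpos hD
    have h2 : ((c (k + 1) - d k) /
        setDist (Set.Ioo (d k) (c (k + 1))) (Set.Ioo (d j) (c (j + 1)))) ^ 2
        ≤ (C₄ / (|((k - j : ℤ) : ℝ)| * C₃)) ^ 2 := by
      apply pow_le_pow_left₀ _ h1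
      exact div_nonneg hnum0 (le_trans hDpos.le hD)
    refine h2.trans (le_of_eq ?_)
    rw [hg]
    field_simp
    rw [sq_abs]
  have hrsum : Summable (fun k : ℤ => g (k - j)) :=
    (Equiv.subRight j).summable_iff.mpr hg_summable
  have hlhs_summable : Summable (fun k : {k : ℤ // k ≠ j} =>
      ((c (k.1 + 1) - d k.1) /
        setDist (Set.Ioo (d k.1) (c (k.1 + 1))) (Set.Ioo (d j) (c (j + 1)))) ^ 2) := by
    apply Summable.of_nonneg_of_le (fun k => sq_nonneg _) hterm
    exact hrsum.subtype _
  calc ∑' k : {k : ℤ // k ≠ j},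
      ((c (k.1 + 1) - d k.1) /
        setDist (Set.Ioo (d k.1) (c (k.1 + 1))) (Set.Ioo (d j) (c (j + 1)))) ^ 2
      ≤ ∑' k : {k : ℤ // k ≠ j}, g (k.1 - j) :=
        Summable.tsum_le_tsum hterm hlhs_summable (hrsum.subtype _)
    _ ≤ ∑' k : ℤ, g (k - j) :=
        Summable.tsum_subtype_le (fun k : ℤ => g (k - j)) {k | k ≠ j}
          (fun k => hg_nonneg _) hrsum
    _ = ∑' n, g n := (Equiv.subRight j).tsum_eq g
    _ ≤ 1 + ∑' n, g n := by linarith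
end

section
/- Let g ∈ L¹(ℝ) and let Q(x) = sin¹⁰⁰(σx)/x¹⁰⁰ for σ > 0 (with the removable singularity at 0 filled in). Then the convolution G(t) = ∫_ℝ g(x) Q(t-x) dx extends to an entire function on ℂ satisfying |G(z)| ≤ C(σ) · ‖g‖_{L¹(ℝ)} · exp(100 σ |Im z|) for all z ∈ ℂ, for some constant C(σ) depending only on σ. -/
open MeasureTheory

-- lemma: |cos u| ≤ exp |Im u|
lemma norm_cos_le_exp (u : ℂ) : ‖Complex.cos u‖ ≤ Real.exp |u.im| := by
  rw [Complex.cos]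
  have h1 : ‖Complex.exp (u * Complex.I)‖ = Real.exp (-u.im) := by
    rw [Complex.norm_exp]; congr 1; simp [Complex.mul_re]
  have h2 : ‖Complex.exp (-u * Complex.I)‖ = Real.exp (u.im) := by
    rw [Complex.norm_exp]; congr 1; simp [Complex.mul_re]
  calc ‖(Complex.exp (u * Complex.I) + Complex.exp (-u * Complex.I)) / 2‖
      ≤ (Real.exp (-u.im) + Real.exp u.im) / 2 := by
        rw [norm_div]
        simp only [Complex.norm_ofNat]
        gcongr
        exact (norm_add_le _ _).trans (by rw [h1, h2])
    _ ≤ Real.exp |u.im| := by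
        have := Real.exp_le_exp.2 (neg_le_abs u.im)
        have := Real.exp_le_exp.2 (le_abs_self u.im)
        linarith

lemma norm_sin_le (w : ℂ) : ‖Complex.sin w‖ ≤ ‖w‖ * Real.exp |w.im| := by
  have key : Complex.sin w = ∫ t in (0:ℝ)..1, w * Complex.cos (t * w) := by
    have : ∀ t ∈ Set.uIcc (0:ℝ) 1, HasDerivAt (fun s : ℝ => Complex.sin (s * w))
        (w * Complex.cos (t * w)) t := by
      intro t _
      have h1 : HasDerivAt (fun s : ℝ => (s : ℂ) * w) w t := by
        simpa using (Complex.ofRealCLM.hasDerivAt (x := t)).mul_const w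
      simpa [mul_comm, Function.comp_def] using (Complex.hasDerivAt_sin ((t : ℂ) * w)).comp t h1
    have := intervalIntegral.integral_eq_sub_of_hasDerivAt this (by
      apply Continuous.intervalIntegrable
      continuity)
    simpa using this.symm
  rw [key]
  have hb : ∀ t ∈ Set.uIcc (0:ℝ) 1, ‖w * Complex.cos (t * w)‖ ≤ ‖w‖ * Real.exp |w.im| := by
    intro t ht
    rw [norm_mul]
    gcongr
    refine (norm_cos_le_exp _).trans (Real.exp_le_exp.2 ?_)
    have ht' : t ∈ Set.Icc (0:ℝ) 1 := by rwa [Set.uIcc_of_le (by norm_num)] at ht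
    have : ((t:ℂ) * w).im = t * w.im := by simp
    rw [this, abs_mul, abs_of_nonneg ht'.1]
    nlinarith [abs_nonneg w.im, ht'.2, ht'.1]
  calc ‖∫ t in (0:ℝ)..1, w * Complex.cos (t * w)‖
      ≤ (‖w‖ * Real.exp |w.im|) * |1 - 0| :=
        intervalIntegral.norm_integral_le_of_norm_le_const (by
          intro t ht
          rw [Set.uIoc_of_le (by norm_num : (0:ℝ) ≤ 1)] at ht
          refine hb t ?_
          rw [Set.uIcc_of_le (by norm_num : (0:ℝ) ≤ 1)]
          exact Set.Ioc_subset_Icc_self ht)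
    _ = ‖w‖ * Real.exp |w.im| := by simp

/-- The kernel `Q(z) = sin¹⁰⁰(σz)/z¹⁰⁰` with the removable singularity at `0` filled in. -/
noncomputable def sincKernel (σ : ℝ) (z : ℂ) : ℂ :=
  if z = 0 then (σ : ℂ) ^ 100 else (Complex.sin (σ * z)) ^ 100 / z ^ 100

lemma sincKernel_eq_dslope_pow (σ : ℝ) :
    sincKernel σ = fun z => (dslope (fun w => Complex.sin (σ * w)) 0 z) ^ 100 := by
  funext z
  rcases eq_or_ne z 0 with rfl | hz
  · have hd : HasDerivAt (fun w : ℂ => Complex.sin (σ * w)) ((σ:ℂ) * Complex.cos (σ * 0)) 0 := by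
      simpa [Function.comp_def] using (Complex.hasDerivAt_sin ((σ:ℂ) * 0)).comp 0
        ((hasDerivAt_id (0:ℂ)).const_mul (σ:ℂ))
    simp [sincKernel, dslope_same, hd.deriv]
  · simp [sincKernel, hz, dslope_of_ne _ hz, slope_def_field, div_pow]

lemma sincKernel_differentiable (σ : ℝ) : Differentiable ℂ (sincKernel σ) := by
  rw [sincKernel_eq_dslope_pow]
  have hf : Differentiable ℂ (fun w : ℂ => Complex.sin (σ * w)) := by
    exact Complex.differentiable_sin.comp (differentiable_const _ |>.mul differentiable_id)
  have : DifferentiableOn ℂ (dslope (fun w => Complex.sin (σ * w)) 0) Set.univ :=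
    (Complex.differentiableOn_dslope (by simp)).2 hf.differentiableOn
  have hd : Differentiable ℂ (dslope (fun w => Complex.sin (σ * w)) 0) :=
    fun z => (this z (Set.mem_univ z)).differentiableAt (by simp)
  exact hd.pow 100

lemma sincKernel_bound (σ : ℝ) (hσ : 0 < σ) (z : ℂ) :
    ‖sincKernel σ z‖ ≤ σ ^ 100 * Real.exp (100 * σ * |z.im|) := by
  have hexp : (1:ℝ) ≤ Real.exp (100 * σ * |z.im|) :=
    Real.one_le_exp (by positivity)
  rcases eq_or_ne z 0 with rfl | hz
  · simp only [sincKernel, if_pos rfl]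
    calc ‖((σ:ℂ)) ^ 100‖ = σ ^ 100 := by
          rw [norm_pow, Complex.norm_real, Real.norm_eq_abs, abs_of_pos hσ]
      _ ≤ σ ^ 100 * Real.exp (100 * σ * |Complex.im 0|) :=
          le_mul_of_one_le_right (by positivity) (Real.one_le_exp (by positivity))
  · simp only [sincKernel, if_neg hz]
    have hsin : ‖Complex.sin ((σ:ℂ) * z)‖ ≤ (σ * ‖z‖) * Real.exp (σ * |z.im|) := by
      have := norm_sin_le ((σ:ℂ) * z)
      have him : ((σ:ℂ) * z).im = σ * z.im := by simp
      have hnorm : ‖(σ:ℂ) * z‖ = σ * ‖z‖ := by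
        rw [norm_mul, Complex.norm_real, Real.norm_eq_abs, abs_of_pos hσ]
      rw [him, hnorm, abs_mul, abs_of_pos hσ] at this
      exact this
    rw [norm_div, norm_pow, norm_pow]
    have hzn : (0:ℝ) < ‖z‖ ^ 100 := pow_pos (norm_pos_iff.2 hz) 100
    rw [div_le_iff₀ hzn]
    calc ‖Complex.sin ((σ:ℂ) * z)‖ ^ 100
        ≤ ((σ * ‖z‖) * Real.exp (σ * |z.im|)) ^ 100 := by
          gcongr
      _ = σ ^ 100 * Real.exp (100 * σ * |z.im|) * ‖z‖ ^ 100 := by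
          rw [mul_pow, mul_pow, ← Real.exp_nat_mul]
          ring_nf

lemma sincKernel_deriv_bound (σ : ℝ) (hσ : 0 < σ) (w : ℂ) :
    ‖deriv (sincKernel σ) w‖ ≤ σ ^ 100 * Real.exp (100 * σ * (|w.im| + 1)) := by
  have hdiff := sincKernel_differentiable σ
  have h := Complex.norm_deriv_le_of_forall_mem_sphere_norm_le (c := w) (R := 1)
    (C := σ ^ 100 * Real.exp (100 * σ * (|w.im| + 1))) one_pos
    (hdiff.diffContOnCl) ?_
  · simpa using h
  · intro z hz
    have him : |z.im| ≤ |w.im| + 1 := by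
      have h1 : |z.im - w.im| ≤ ‖z - w‖ := by
        simpa using Complex.abs_im_le_norm (z - w)
      have h2 : ‖z - w‖ = 1 := by simpa [Metric.mem_sphere, dist_eq_norm] using hz
      calc |z.im| ≤ |w.im| + |z.im - w.im| := by
            have := abs_sub_abs_le_abs_sub z.im w.im; linarith [abs_sub_comm z.im w.im]
        _ ≤ |w.im| + 1 := by rw [h2] at h1; linarith
    refine (sincKernel_bound σ hσ z).trans ?_
    gcongr

/-- For `g ∈ L¹(ℝ)`, the convolution `G(t) = ∫ g(x) Q(t-x) dx` extends to an
entire function satisfying `|G(z)| ≤ C(σ)‖g‖_{L¹} exp(100σ|Im z|)`. -/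
theorem convolution_with_sinc_kernel_entire
    (σ : ℝ) (hσ : 0 < σ) (g : ℝ → ℂ) (hg : Integrable g) :
    ∃ (G : ℂ → ℂ) (C : ℝ), 0 < C ∧ Differentiable ℂ G ∧
      (∀ t : ℝ, G (t : ℂ) = ∫ x : ℝ, g x * sincKernel σ ((t : ℂ) - (x : ℂ))) ∧
      (∀ z : ℂ, ‖G z‖ ≤ C * (∫ x : ℝ, ‖g x‖) * Real.exp (100 * σ * |z.im|)) := by
  set Q := sincKernel σ with hQ
  have hQd : Differentiable ℂ Q := sincKernel_differentiable σ
  have hQc : Continuous Q := hQd.continuous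
  have hQ'd : Differentiable ℂ (deriv Q) := by
    have h := (hQd.differentiableOn.analyticOnNhd isOpen_univ).deriv
    exact fun x => (h.differentiableOn x (Set.mem_univ x)).differentiableAt Filter.univ_mem
  have hQ'c : Continuous (deriv Q) := hQ'd.continuous
  refine ⟨fun z => ∫ x : ℝ, g x * Q (z - (x:ℂ)), σ ^ 100, by positivity, ?_, fun t => rfl, ?_⟩
  · -- differentiability
    intro z₀
    have meas : ∀ z : ℂ, AEStronglyMeasurable (fun x : ℝ => g x * Q (z - (x:ℂ))) volume := by
      intro z
      exact hg.1.mul ((hQc.comp (by continuity)).aestronglyMeasurable)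
    have meas' : AEStronglyMeasurable (fun x : ℝ => g x * deriv Q (z₀ - (x:ℂ))) volume :=
      hg.1.mul ((hQ'c.comp (by continuity)).aestronglyMeasurable)
    have him : ∀ (z : ℂ) (x : ℝ), (z - (x:ℂ)).im = z.im := by intro z x; simp
    have hint : Integrable (fun x : ℝ => g x * Q (z₀ - (x:ℂ))) volume := by
      refine (hg.norm.mul_const (σ ^ 100 * Real.exp (100 * σ * |z₀.im|))).mono'
        (meas z₀) (Filter.Eventually.of_forall fun x => ?_)
      rw [norm_mul]
      refine mul_le_mul_of_nonneg_left ?_ (norm_nonneg _)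
      have := sincKernel_bound σ hσ (z₀ - (x:ℂ))
      rwa [him z₀ x] at this
    have key := hasDerivAt_integral_of_dominated_loc_of_deriv_le (μ := volume)
      (F := fun (z : ℂ) (x : ℝ) => g x * Q (z - (x:ℂ)))
      (F' := fun (z : ℂ) (x : ℝ) => g x * deriv Q (z - (x:ℂ)))
      (bound := fun x : ℝ => ‖g x‖ * (σ ^ 100 * Real.exp (100 * σ * (|z₀.im| + 2))))
      (x₀ := z₀) (Metric.ball_mem_nhds z₀ one_pos) (Filter.Eventually.of_forall meas) hint meas'
      (Filter.Eventually.of_forall ?_)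
      (hg.norm.mul_const _)
      (Filter.Eventually.of_forall ?_)
    · exact key.2.differentiableAt
    · intro x z hz
      rw [norm_mul]
      refine mul_le_mul_of_nonneg_left ?_ (norm_nonneg _)
      refine (sincKernel_deriv_bound σ hσ _).trans ?_
      refine mul_le_mul_of_nonneg_left (Real.exp_le_exp.2 ?_) (by positivity)
      have h1 : |z.im - z₀.im| ≤ ‖z - z₀‖ := by
        simpa using Complex.abs_im_le_norm (z - z₀)
      have h2 : ‖z - z₀‖ < 1 := by simpa [Metric.mem_ball, dist_eq_norm] using hz
      have h3 : |(z - (x:ℂ)).im| = |z.im| := by rw [him z x]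
      rw [h3]
      have h4 : |z.im| ≤ |z₀.im| + 1 := by
        have := abs_sub_abs_le_abs_sub z.im z₀.im
        linarith
      nlinarith [hσ.le]
    · intro x z hz
      have h1 : HasDerivAt (fun w : ℂ => w - (x:ℂ)) 1 z := (hasDerivAt_id z).sub_const _
      have h2 : HasDerivAt Q (deriv Q (z - (x:ℂ))) (z - (x:ℂ)) := (hQd _).hasDerivAt
      have h3 := (h2.comp z h1)
      simpa using h3.const_mul (g x)
  · -- bound
    intro z
    have him' : ∀ x : ℝ, (z - (x:ℂ)).im = z.im := by intro x; simp
    have hb : ∀ x : ℝ, ‖g x * Q (z - (x:ℂ))‖ ≤ ‖g x‖ * (σ ^ 100 * Real.exp (100 * σ * |z.im|)) := by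
      intro x
      rw [norm_mul]
      refine mul_le_mul_of_nonneg_left ?_ (norm_nonneg _)
      have := sincKernel_bound σ hσ (z - (x:ℂ))
      rwa [him' x] at this
    calc ‖∫ x : ℝ, g x * Q (z - (x:ℂ))‖
        ≤ ∫ x : ℝ, ‖g x * Q (z - (x:ℂ))‖ := norm_integral_le_integral_norm _
      _ ≤ ∫ x : ℝ, ‖g x‖ * (σ ^ 100 * Real.exp (100 * σ * |z.im|)) := by
          refine integral_mono_of_nonneg (Filter.Eventually.of_forall fun x => norm_nonneg _)
            (hg.norm.mul_const _) (Filter.Eventually.of_forall hb)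
      _ = σ ^ 100 * (∫ x : ℝ, ‖g x‖) * Real.exp (100 * σ * |z.im|) := by
          rw [integral_mul_const]; ring
end
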